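/- arXiv:2505.12097 — 2 statements merged into one kernel-verified Lean document; each statement's English description precedes it below -/
import Mathlib

section
/- Let X and Y be compact metric spaces, c : X × Y → ℝ continuous, P a Borel probability measure on X, Q a Borel probability measure on Y, and ε > 0. Then the supremum sup_{(φ,ψ) ∈ Φ_c} { ∫ φ dP − ε log ∫ e^{−ψ/ε} dQ } is attained at some pair (φ*, ψ*) ∈ Φ_c that moreover satisfies ψ* = (φ*)^c, where the c-transform is defined by φ^c(y) = inf_{x ∈ X} [ c(x,y) − φ(x) ]; in particular φ* is c̄-concave and ψ* is c-concave. -/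
open MeasureTheory Filter Topology

/-- The optimal transport cost between two measures for the cost function `c`,
defined as the infimum of `∫ c dπ` over all couplings `π` of `P` and `Q`. -/
noncomputable def transportCost {X Y : Type*} [MeasurableSpace X] [MeasurableSpace Y]
    (c : X × Y → ENNReal) (P : Measure X) (Q : Measure Y) : ENNReal :=
  ⨅ π ∈ {π : Measure (X × Y) | π.map Prod.fst = P ∧ π.map Prod.snd = Q}, ∫⁻ z, c z ∂π

/-- The Kullback-Leibler divergence `𝔇_KL(R‖Q) = ∫ log (dR/dQ) dR` if `R ≪ Q`
(and the integral makes sense), and `+∞` otherwise. -/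
noncomputable def klDiv {Y : Type*} [MeasurableSpace Y] (R Q : Measure Y) : ENNReal :=
  open Classical in
  if R ≪ Q ∧ Integrable (llr R Q) R then ENNReal.ofReal (∫ y, llr R Q y ∂ R) else ⊤

/-- The proximal optimal transport divergence with the KL divergence:
`𝔇^c_{KL,ε}(P‖Q) = inf_R [ T_c(P,R) + ε 𝔇_KL(R‖Q) ]`. -/
noncomputable def proxOTKL {X Y : Type*} [MeasurableSpace X] [MeasurableSpace Y]
    (c : X × Y → ENNReal) (ε : ℝ) (P : Measure X) (Q : Measure Y) : ENNReal :=
  ⨅ R : ProbabilityMeasure Y,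
    transportCost c P (R : Measure Y) + ENNReal.ofReal ε * klDiv (R : Measure Y) Q

/-- The dual objective `J(φ,ψ) = ∫ φ dP − ε log ∫ e^{−ψ/ε} dQ`. -/
noncomputable def dualObj {X Y : Type*} [MeasurableSpace X] [MeasurableSpace Y]
    [TopologicalSpace X] [TopologicalSpace Y]
    (P : Measure X) (Q : Measure Y) (ε : ℝ)
    (φ : BoundedContinuousFunction X ℝ) (ψ : BoundedContinuousFunction Y ℝ) : ℝ :=
  ∫ x, φ x ∂P - ε * Real.log (∫ y, Real.exp (-(ψ y) / ε) ∂Q)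

/-!
Passing from an admissible pair `(φ, ψ)` to `(φ^{cc̄}, φ^c)` can only increase the dual objective
`J`, since `J` is monotone in both arguments, `ψ ≤ φ^c`, `φ ≤ φ^{cc̄}` and `φ^{cc̄c} = φ^c`.
As `J (φ + a, ψ - a) = J (φ, ψ)`, it therefore suffices to maximise the continuous function
`φ ↦ J (φ, φ^c)` over the `c̄`-concave `φ` with `φ x₀ = 0`. These all have the modulus of
continuity of `c` and are bounded by `2 ‖c‖`, so by Arzelà–Ascoli they form a compact set.
-/

open BoundedContinuousFunction

section CTransform

variable {A B : Type*} [TopologicalSpace A] [CompactSpace A] [TopologicalSpace B]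

theorem bddBelow_range_cost_sub (d : C(A × B, ℝ)) (φ : A →ᵇ ℝ) (y : B) :
    BddBelow (Set.range fun x => d (x, y) - φ x) :=
  (isCompact_range (by fun_prop)).bddBelow

variable [CompactSpace B]

noncomputable def cTransform (d : C(A × B, ℝ)) (φ : A →ᵇ ℝ) : B →ᵇ ℝ :=
  mkOfCompact ⟨fun y => ⨅ x, d (x, y) - φ x, by
    simpa only [Set.image_univ, sInf_range] using
      isCompact_univ.continuous_sInf (f := fun y x => d (x, y) - φ x) (by fun_prop)⟩

variable (d : C(A × B, ℝ))

theorem cTransform_le (φ : A →ᵇ ℝ) (x : A) (y : B) : cTransform d φ y ≤ d (x, y) - φ x :=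
  ciInf_le (bddBelow_range_cost_sub d φ y) x

theorem add_cTransform_le (φ : A →ᵇ ℝ) (x : A) (y : B) : φ x + cTransform d φ y ≤ d (x, y) := by
  linarith [cTransform_le d φ x y]

section

variable [Nonempty A]

theorem le_cTransform {φ : A →ᵇ ℝ} {ψ : B → ℝ} (h : ∀ x y, φ x + ψ y ≤ d (x, y)) (y : B) :
    ψ y ≤ cTransform d φ y :=
  le_ciInf fun x => by linarith [h x y]

theorem cTransform_le_cTransform_add {φ φ' : A →ᵇ ℝ} {y y' : B} {r : ℝ}
    (h : ∀ x, (d (x, y) - φ x) - (d (x, y') - φ' x) ≤ r) :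
    cTransform d φ y ≤ cTransform d φ' y' + r := by
  suffices cTransform d φ y - r ≤ cTransform d φ' y' by linarith
  exact le_ciInf fun x => by linarith [cTransform_le d φ x y, h x]

theorem cTransform_add_const (φ : A →ᵇ ℝ) (a : ℝ) :
    cTransform d (φ + const A a) = cTransform d φ - const B a := by
  ext y
  have h₁ := cTransform_le_cTransform_add d (y := y) (φ := φ + const A a) (φ' := φ)
    (r := -a) fun x => by simp only [BoundedContinuousFunction.add_apply, const_apply]; linarith
  have h₂ := cTransform_le_cTransform_add d (y := y) (φ := φ) (φ' := φ + const A a)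
    (r := a) fun x => by simp only [BoundedContinuousFunction.add_apply, const_apply]; linarith
  simp only [BoundedContinuousFunction.sub_apply, const_apply]
  linarith

theorem cTransform_sub_const (φ : A →ᵇ ℝ) (a : ℝ) :
    cTransform d (φ - const A a) = cTransform d φ + const B a := by
  have h : φ - const A a = φ + const A (-a) := by ext; simp [sub_eq_add_neg]
  rw [h, cTransform_add_const]
  ext; simp

theorem abs_cTransform_sub_cTransform_le {φ φ' : A →ᵇ ℝ} {y y' : B} {r : ℝ}
    (h : ∀ x, |(d (x, y) - φ x) - (d (x, y') - φ' x)| ≤ r) :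
    |cTransform d φ y - cTransform d φ' y'| ≤ r := by
  rw [abs_sub_le_iff]
  constructor
  · linarith [cTransform_le_cTransform_add d fun x => (abs_sub_le_iff.1 (h x)).1]
  · linarith [cTransform_le_cTransform_add d fun x => (abs_sub_le_iff.1 (h x)).2]

theorem lipschitzWith_cTransform : LipschitzWith 1 (cTransform d) := by
  refine LipschitzWith.of_dist_le_mul fun φ φ' => ?_
  rw [NNReal.coe_one, one_mul]
  refine (BoundedContinuousFunction.dist_le dist_nonneg).2 fun y => ?_
  refine abs_cTransform_sub_cTransform_le d fun x => ?_
  rw [sub_sub_sub_cancel_left, abs_sub_comm, ← Real.dist_eq]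
  exact dist_coe_le_dist x

theorem equicontinuous_cTransform : Equicontinuous fun φ : A →ᵇ ℝ => ⇑(cTransform d φ) := by
  intro y
  rw [Metric.equicontinuousAt_iff_right]
  intro e he
  have hd : ∀ᶠ y' in 𝓝 y, ∀ x ∈ Set.univ, dist (d (x, y)) (d (x, y')) < e / 2 :=
    isCompact_univ.eventually_forall_of_forall_eventually fun x _ => by
      have hcont : Continuous fun z : B × A => dist (d (z.2, y)) (d (z.2, z.1)) := by fun_prop
      simpa using hcont.continuousAt.eventually_lt (continuousAt_const (y := e / 2))
        (by simpa using half_pos he)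
  filter_upwards [hd] with y' hy' φ
  rw [Real.dist_eq]
  have := abs_cTransform_sub_cTransform_le d (φ := φ) (φ' := φ) (y := y) (y' := y') fun x => by
    simpa only [sub_sub_sub_cancel_right, Real.dist_eq] using (hy' x trivial).le
  linarith

theorem cTransform_anti {φ φ' : A →ᵇ ℝ} (h : φ ≤ φ') : cTransform d φ' ≤ cTransform d φ :=
  fun y => le_ciInf fun x => (cTransform_le d φ' x y).trans (by linarith [show φ x ≤ φ' x from h x])

end

theorem le_cTransform_swap_cTransform [Nonempty B] (φ : A →ᵇ ℝ) :
    φ ≤ cTransform (d.comp .prodSwap) (cTransform d φ) :=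
  le_cTransform (d.comp .prodSwap) fun y x => by rw [add_comm]; exact add_cTransform_le d φ x y

/-- The fixed points of `φ ↦ φ^{cc̄}` are the `c̄`-concave functions; fixing their value at `x₀`
removes the invariance of the dual objective under `(φ, ψ) ↦ (φ + a, ψ - a)`. -/
def normalizedCConcave (x₀ : A) : Set (A →ᵇ ℝ) :=
  {φ | cTransform (d.comp .prodSwap) (cTransform d φ) = φ ∧ φ x₀ = 0}

variable [Nonempty A] [Nonempty B]

theorem cTransform_cTransform_swap_cTransform (φ : A →ᵇ ℝ) :
    cTransform d (cTransform (d.comp .prodSwap) (cTransform d φ)) = cTransform d φ :=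
  le_antisymm (cTransform_anti d (le_cTransform_swap_cTransform d φ))
    (le_cTransform d fun x y => by
      rw [add_comm]; exact add_cTransform_le (d.comp .prodSwap) (cTransform d φ) y x)

theorem cTransform_swap_cTransform_add_const (φ : A →ᵇ ℝ) (a : ℝ) :
    cTransform (d.comp .prodSwap) (cTransform d (φ + const A a)) =
      cTransform (d.comp .prodSwap) (cTransform d φ) + const A a := by
  rw [cTransform_add_const, cTransform_sub_const]

theorem isCompact_normalizedCConcave (x₀ : A) : IsCompact (normalizedCConcave d x₀) := by
  have hT := (lipschitzWith_cTransform d).continuous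
  have hT' := (lipschitzWith_cTransform (d.comp .prodSwap)).continuous
  have hbound : ∀ φ ∈ normalizedCConcave d x₀, ∀ x, |φ x| ≤ 2 * ‖d‖ := by
    rintro φ ⟨hφ, hφx₀⟩ x
    rw [← sub_zero (φ x), ← hφx₀, ← hφ]
    refine abs_cTransform_sub_cTransform_le _ fun y => ?_
    rw [sub_sub_sub_cancel_right, two_mul]
    refine (abs_sub _ _).trans (add_le_add ?_ ?_) <;> exact d.norm_coe_le_norm _
  refine arzela_ascoli₂ (Metric.closedBall 0 (2 * ‖d‖)) (isCompact_closedBall _ _) _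
    ((isClosed_eq (hT'.comp hT) continuous_id).inter
      (isClosed_eq (continuous_eval_const x₀) continuous_const))
    (fun φ x hφ => by simpa using hbound φ hφ x) ?_
  have hfamily : ((↑) : normalizedCConcave d x₀ → A → ℝ) =
      fun φ : normalizedCConcave d x₀ => ⇑(cTransform (d.comp .prodSwap) (cTransform d φ)) := by
    funext φ; rw [φ.2.1]
  rw [hfamily]
  exact (equicontinuous_cTransform _).comp fun φ : normalizedCConcave d x₀ => cTransform d φ

end CTransform

section DualObjective

variable {X Y : Type*} [TopologicalSpace X] [MeasurableSpace X] [OpensMeasurableSpace X]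
  [TopologicalSpace Y] [MeasurableSpace Y] [OpensMeasurableSpace Y]

theorem integrable_comp_boundedContinuousFunction (μ : Measure Y) [IsFiniteMeasure μ]
    {g : ℝ → ℝ} (hg : Continuous g) (ψ : Y →ᵇ ℝ) : Integrable (fun y => g (ψ y)) μ := by
  obtain ⟨C, hC⟩ :=
    (isCompact_closedBall (0 : ℝ) ‖ψ‖).exists_bound_of_continuousOn hg.continuousOn
  exact .of_bound (hg.comp ψ.continuous).aestronglyMeasurable C
    (ae_of_all _ fun y => hC _ (by simpa using ψ.norm_coe_le_norm y))

theorem continuous_integral_comp_boundedContinuousFunction (μ : Measure Y) [IsFiniteMeasure μ]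
    {g : ℝ → ℝ} (hg : Continuous g) : Continuous fun ψ : Y →ᵇ ℝ => ∫ y, g (ψ y) ∂μ := by
  refine continuous_iff_continuousAt.2 fun ψ₀ => ?_
  obtain ⟨C, hC⟩ :=
    (isCompact_closedBall (0 : ℝ) (‖ψ₀‖ + 1)).exists_bound_of_continuousOn hg.continuousOn
  refine continuousAt_of_dominated (bound := fun _ => C)
    (Eventually.of_forall fun ψ => (hg.comp ψ.continuous).aestronglyMeasurable) ?_
    (integrable_const C) (ae_of_all _ fun y => (hg.comp (continuous_eval_const y)).continuousAt)
  filter_upwards [Metric.closedBall_mem_nhds ψ₀ one_pos] with ψ hψ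
  refine ae_of_all _ fun y => hC _ ?_
  rw [mem_closedBall_zero_iff]
  exact (ψ.norm_coe_le_norm y).trans (norm_le_of_mem_closedBall hψ)

variable {P : Measure X} {Q : Measure Y} [IsFiniteMeasure P] [IsFiniteMeasure Q] {ε : ℝ}

theorem integrable_exp_neg_div (ψ : Y →ᵇ ℝ) : Integrable (fun y => Real.exp (-(ψ y) / ε)) Q :=
  integrable_comp_boundedContinuousFunction Q (g := fun t => Real.exp (-t / ε)) (by fun_prop) ψ

variable [NeZero Q]

theorem integral_exp_neg_div_pos (ψ : Y →ᵇ ℝ) : 0 < ∫ y, Real.exp (-(ψ y) / ε) ∂Q :=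
  integral_exp_pos (integrable_exp_neg_div ψ)

theorem dualObj_le_dualObj (hε : 0 ≤ ε) {φ φ' : X →ᵇ ℝ} {ψ ψ' : Y →ᵇ ℝ} (hφ : φ ≤ φ')
    (hψ : ψ ≤ ψ') : dualObj P Q ε φ ψ ≤ dualObj P Q ε φ' ψ' := by
  have hP : ∫ x, φ x ∂P ≤ ∫ x, φ' x ∂P := integral_mono (φ.integrable P) (φ'.integrable P) hφ
  have hQ : ∫ y, Real.exp (-(ψ' y) / ε) ∂Q ≤ ∫ y, Real.exp (-(ψ y) / ε) ∂Q :=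
    integral_mono (integrable_exp_neg_div ψ') (integrable_exp_neg_div ψ) fun y => by
        gcongr; exact hψ y
  have := mul_le_mul_of_nonneg_left (Real.log_le_log (integral_exp_neg_div_pos ψ') hQ) hε
  unfold dualObj
  linarith

theorem dualObj_add_const_sub_const [IsProbabilityMeasure P] (hε : ε ≠ 0) (φ : X →ᵇ ℝ)
    (ψ : Y →ᵇ ℝ) (a : ℝ) :
    dualObj P Q ε (φ + const X a) (ψ - const Y a) = dualObj P Q ε φ ψ := by
  have hP : ∫ x, (φ + const X a) x ∂P = ∫ x, φ x ∂P + a := by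
    simp only [BoundedContinuousFunction.add_apply, const_apply]
    rw [integral_add (φ.integrable P) (integrable_const a)]
    simp
  have hQ : ∫ y, Real.exp (-((ψ - const Y a) y) / ε) ∂Q =
      Real.exp (a / ε) * ∫ y, Real.exp (-(ψ y) / ε) ∂Q := by
    rw [← integral_const_mul]
    congr 1 with y
    rw [← Real.exp_add, BoundedContinuousFunction.sub_apply, const_apply]
    ring_nf
  unfold dualObj
  rw [hP, hQ, Real.log_mul (Real.exp_ne_zero _) (integral_exp_neg_div_pos ψ).ne', Real.log_exp,
    mul_add, mul_div_cancel₀ _ hε]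
  ring

theorem continuous_dualObj :
    Continuous fun p : (X →ᵇ ℝ) × (Y →ᵇ ℝ) => dualObj P Q ε p.1 p.2 := by
  have hP := continuous_integral_comp_boundedContinuousFunction P continuous_id
  have hQ := continuous_integral_comp_boundedContinuousFunction Q
    (g := fun t => Real.exp (-t / ε)) (by fun_prop)
  exact (hP.comp continuous_fst).sub <| continuous_const.mul <|
    (hQ.comp continuous_snd).log fun p => (integral_exp_neg_div_pos p.2).ne'

end DualObjective

theorem exists_mem_normalizedCConcave_dualObj_le
    {X Y : Type*} [TopologicalSpace X] [CompactSpace X] [Nonempty X] [MeasurableSpace X]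
    [OpensMeasurableSpace X] [TopologicalSpace Y] [CompactSpace Y] [Nonempty Y]
    [MeasurableSpace Y] [OpensMeasurableSpace Y] (d : C(X × Y, ℝ))
    (P : Measure X) (Q : Measure Y) [IsProbabilityMeasure P] [IsProbabilityMeasure Q]
    {ε : ℝ} (hε : 0 < ε) (x₀ : X) {φ : X →ᵇ ℝ} {ψ : Y →ᵇ ℝ}
    (h : ∀ x y, φ x + ψ y ≤ d (x, y)) :
    ∃ φ' ∈ normalizedCConcave d x₀, dualObj P Q ε φ ψ ≤ dualObj P Q ε φ' (cTransform d φ') := by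
  set χ := cTransform (d.comp .prodSwap) (cTransform d φ)
  have hχ : cTransform d χ = cTransform d φ := cTransform_cTransform_swap_cTransform d φ
  refine ⟨χ + const X (-χ x₀), ⟨?_, by simp⟩, ?_⟩
  · rw [cTransform_swap_cTransform_add_const, hχ]
  calc dualObj P Q ε φ ψ ≤ dualObj P Q ε χ (cTransform d φ) :=
        dualObj_le_dualObj hε.le (le_cTransform_swap_cTransform d φ) (le_cTransform d h)
    _ = dualObj P Q ε (χ + const X (-χ x₀)) (cTransform d χ - const Y (-χ x₀)) := by
        rw [dualObj_add_const_sub_const hε.ne', hχ]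
    _ = dualObj P Q ε (χ + const X (-χ x₀)) (cTransform d (χ + const X (-χ x₀))) := by
        rw [cTransform_add_const]

/-- On compact metric spaces with a continuous cost, the dual problem admits a maximizer
`(φ*, ψ*) ∈ Φ_c` with `ψ* = (φ*)^c` (so `ψ*` is `c`-concave) and `φ* = (ψ*)^{c̄}`
(so `φ*` is `c̄`-concave). -/
theorem dual_maximizer_exists_compact
    {X Y : Type*} [MetricSpace X] [CompactSpace X] [Nonempty X]
    [MeasurableSpace X] [BorelSpace X]
    [MetricSpace Y] [CompactSpace Y] [Nonempty Y]
    [MeasurableSpace Y] [BorelSpace Y]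
    (c : X × Y → ℝ) (hc : Continuous c)
    (P : Measure X) (Q : Measure Y) [IsProbabilityMeasure P] [IsProbabilityMeasure Q]
    (ε : ℝ) (hε : 0 < ε) :
    ∃ (φs : BoundedContinuousFunction X ℝ) (ψs : BoundedContinuousFunction Y ℝ),
      (∀ x y, φs x + ψs y ≤ c (x, y)) ∧
      (∀ (φ : BoundedContinuousFunction X ℝ) (ψ : BoundedContinuousFunction Y ℝ),
        (∀ x y, φ x + ψ y ≤ c (x, y)) → dualObj P Q ε φ ψ ≤ dualObj P Q ε φs ψs) ∧
      (∀ y, ψs y = ⨅ x, (c (x, y) - φs x)) ∧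
      (∀ x, φs x = ⨅ y, (c (x, y) - ψs y)) := by
  obtain ⟨x₀⟩ := ‹Nonempty X›
  set d : C(X × Y, ℝ) := ⟨c, hc⟩
  have hG : Continuous fun φ => dualObj P Q ε φ (cTransform d φ) :=
    continuous_dualObj.comp (continuous_id.prodMk (lipschitzWith_cTransform d).continuous)
  obtain ⟨φ₀, hφ₀, -⟩ := exists_mem_normalizedCConcave_dualObj_le d P Q hε x₀
    (add_cTransform_le d 0)
  obtain ⟨φs, hφs, hmax⟩ :=
    (isCompact_normalizedCConcave d x₀).exists_isMaxOn ⟨φ₀, hφ₀⟩ hG.continuousOn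
  refine ⟨φs, cTransform d φs, add_cTransform_le d φs, fun φ ψ h => ?_, fun y => rfl,
    fun x => (DFunLike.congr_fun hφs.1 x).symm⟩
  obtain ⟨φ', hφ', hle⟩ := exists_mem_normalizedCConcave_dualObj_le d P Q hε x₀ h
  exact hle.trans (hmax hφ')
end

section
/- Let n = n₁ + n₂, X = ℝⁿ, p ≥ 1, with cost c(x,y) = ‖x−y‖_p^p (the p-th power of the ℓ^p norm). Let P₁, Q₁ be Borel probability measures on ℝ^{n₁} and P₂, Q₂ Borel probability measures on ℝ^{n₂}, all with finite p-th moments. Then for every ε > 0 the proximal p-Wasserstein KL divergence is additive over products: 𝔇^p_{KL,ε}(P₁ ⊗ P₂ ‖ Q₁ ⊗ Q₂) = 𝔇^p_{KL,ε}(P₁ ‖ Q₁) + 𝔇^p_{KL,ε}(P₂ ‖ Q₂), where on each factor ℝ^{n_i} the divergence is defined with the cost ‖x−y‖_p^p on that factor. -/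
open MeasureTheory Filter Topology

/-- The `ℓ^p` transport cost `c(x,y) = ‖x − y‖_p^p = ∑ i, |x i − y i|^p` on `ℝ^m`. -/
noncomputable def lpCost (m : ℕ) (p : ℝ) : ((Fin m → ℝ) × (Fin m → ℝ)) → ENNReal :=
  fun z => ENNReal.ofReal (∑ i, |z.1 i - z.2 i| ^ p)

/-!
Both inequalities compare candidates. Given `R₁`, `R₂` and couplings `π₁`, `π₂`, the measure
`R₁ ⊗ R₂` together with the coupling `π₁ ⊗ π₂` (coordinates regrouped) is a candidate for the
product problem, at cost `T₁ + T₂`, and KL is additive on products. Conversely, a candidate `R`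
for the product problem splits into its marginals `R₁, R₂`: a coupling of `P₁ ⊗ P₂` with `R`
projects to couplings of `Pᵢ` with `Rᵢ` whose costs add up to its own, and disintegrating `R`
over `R₁` the chain rule gives `KL(R ‖ Q₁ ⊗ Q₂) = KL(R₁ ‖ Q₁) + KL(R ‖ R₁ ⊗ Q₂)`, whose last
term is at least `KL(R₂ ‖ Q₂)` by data processing along `Prod.snd`.
-/

open scoped ENNReal

namespace MeasureTheory.Measure

variable {α β γ δ : Type*} [MeasurableSpace α] [MeasurableSpace β] [MeasurableSpace γ]
  [MeasurableSpace δ]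

lemma isProbabilityMeasure_of_fst_eq {π : Measure (α × β)} {P : Measure α}
    [IsProbabilityMeasure P] (h : π.fst = P) : IsProbabilityMeasure π := by
  have : IsProbabilityMeasure (π.map Prod.fst) := by rw [← Measure.fst, h]; infer_instance
  exact isProbabilityMeasure_of_map Prod.fst

lemma fst_map_prodMap (π : Measure (γ × δ)) {f : γ → α} {g : δ → β} (hf : Measurable f)
    (hg : Measurable g) : (π.map (Prod.map f g)).fst = π.fst.map f := by
  rw [Measure.fst, Measure.fst, Measure.map_map measurable_fst (hf.prodMap hg),
    Measure.map_map hf measurable_fst]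
  rfl

lemma snd_map_prodMap (π : Measure (γ × δ)) {f : γ → α} {g : δ → β} (hf : Measurable f)
    (hg : Measurable g) : (π.map (Prod.map f g)).snd = π.snd.map g := by
  rw [Measure.snd, Measure.snd, Measure.map_map measurable_snd (hf.prodMap hg),
    Measure.map_map hg measurable_snd]
  rfl

end MeasureTheory.Measure

namespace InformationTheory

-- Inside this namespace `klDiv` is Mathlib's divergence, not the one defined above.

variable {α β : Type*} [MeasurableSpace α] [MeasurableSpace β]

lemma klDiv_map_measurableEquiv (μ ν : Measure α) [IsFiniteMeasure μ] [IsFiniteMeasure ν]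
    (e : α ≃ᵐ β) : klDiv (μ.map e) (ν.map e) = klDiv μ ν := by
  refine le_antisymm (klDiv_map_le μ ν e.measurable) ?_
  calc klDiv μ ν = klDiv ((μ.map e).map e.symm) ((ν.map e).map e.symm) := by
        rw [MeasurableEquiv.map_symm_map, MeasurableEquiv.map_symm_map]
    _ ≤ klDiv (μ.map e) (ν.map e) := klDiv_map_le _ _ e.symm.measurable

lemma klDiv_prod_left (μ : Measure α) (ν₁ ν₂ : Measure β) [IsProbabilityMeasure μ]
    [IsFiniteMeasure ν₁] [IsFiniteMeasure ν₂] :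
    klDiv (μ.prod ν₁) (μ.prod ν₂) = klDiv ν₁ ν₂ := by
  rw [← klDiv_map_measurableEquiv _ _ MeasurableEquiv.prodComm]
  simp only [MeasurableEquiv.prodComm, MeasurableEquiv.coe_mk, Equiv.coe_prodComm,
    Measure.prod_swap]
  rw [← Measure.compProd_const, ← Measure.compProd_const, klDiv_compProd_left]

lemma klDiv_prod (μ₁ ν₁ : Measure α) (μ₂ ν₂ : Measure β) [IsProbabilityMeasure μ₁]
    [IsFiniteMeasure ν₁] [IsProbabilityMeasure μ₂] [IsProbabilityMeasure ν₂] :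
    klDiv (μ₁.prod μ₂) (ν₁.prod ν₂) = klDiv μ₁ ν₁ + klDiv μ₂ ν₂ := by
  rw [← klDiv_prod_left μ₁ μ₂ ν₂, ← Measure.compProd_const, ← Measure.compProd_const,
    ← Measure.compProd_const, klDiv_compProd_eq_add]

lemma klDiv_fst_add_klDiv_snd_le [StandardBorelSpace β] [Nonempty β] (ρ : Measure (α × β))
    (ν₁ : Measure α) (ν₂ : Measure β) [IsProbabilityMeasure ρ] [IsFiniteMeasure ν₁]
    [IsProbabilityMeasure ν₂] :
    klDiv ρ.fst ν₁ + klDiv ρ.snd ν₂ ≤ klDiv ρ (ν₁.prod ν₂) := by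
  calc klDiv ρ.fst ν₁ + klDiv ρ.snd ν₂ = klDiv ρ.fst ν₁ + klDiv ρ.snd (ρ.fst.prod ν₂).snd := by
        rw [Measure.snd_prod]
    _ ≤ klDiv ρ.fst ν₁ + klDiv ρ (ρ.fst.prod ν₂) := by
        gcongr
        exact klDiv_map_le _ _ measurable_snd
    _ = klDiv ρ (ν₁.prod ν₂) := by
        have chain :=
          klDiv_compProd_eq_add ρ.fst ν₁ ρ.condKernel (ProbabilityTheory.Kernel.const α ν₂)
        rwa [ρ.disintegrate, Measure.compProd_const, Measure.compProd_const, eq_comm] at chain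

end InformationTheory

-- Mathlib's divergence carries the correction term `Q univ - R univ`.
lemma klDiv_eq_informationTheory_klDiv {α : Type*} [MeasurableSpace α] {R Q : Measure α}
    (h : R Set.univ = Q Set.univ) :
    klDiv R Q = InformationTheory.klDiv R Q := by
  by_cases hRQ : R ≪ Q ∧ Integrable (llr R Q) R
  · rw [klDiv, if_pos hRQ, InformationTheory.klDiv_of_ac_of_integrable hRQ.1 hRQ.2,
      measureReal_def, measureReal_def, h, add_sub_cancel_right]
  · rw [klDiv, if_neg hRQ, eq_comm, InformationTheory.klDiv_eq_top_iff]
    exact fun hac hint => hRQ ⟨hac, hint⟩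

section ProbabilityMeasures

variable {α β : Type*} [MeasurableSpace α] [MeasurableSpace β]

lemma klDiv_prod (R₁ Q₁ : Measure α) (R₂ Q₂ : Measure β) [IsProbabilityMeasure R₁]
    [IsProbabilityMeasure Q₁] [IsProbabilityMeasure R₂] [IsProbabilityMeasure Q₂] :
    klDiv (R₁.prod R₂) (Q₁.prod Q₂) = klDiv R₁ Q₁ + klDiv R₂ Q₂ := by
  simp only [klDiv_eq_informationTheory_klDiv, measure_univ]
  exact InformationTheory.klDiv_prod R₁ Q₁ R₂ Q₂

lemma klDiv_fst_add_klDiv_snd_le [StandardBorelSpace β] [Nonempty β] (R : Measure (α × β))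
    (Q₁ : Measure α) (Q₂ : Measure β) [IsProbabilityMeasure R] [IsProbabilityMeasure Q₁]
    [IsProbabilityMeasure Q₂] :
    klDiv R.fst Q₁ + klDiv R.snd Q₂ ≤ klDiv R (Q₁.prod Q₂) := by
  simp only [klDiv_eq_informationTheory_klDiv, measure_univ]
  exact InformationTheory.klDiv_fst_add_klDiv_snd_le R Q₁ Q₂

end ProbabilityMeasures

section Transport

variable {α₁ α₂ β₁ β₂ : Type*} [MeasurableSpace α₁] [MeasurableSpace α₂]
  [MeasurableSpace β₁] [MeasurableSpace β₂]

lemma transportCost_le_lintegral {c : α₁ × β₁ → ℝ≥0∞} {P : Measure α₁} {R : Measure β₁}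
    {π : Measure (α₁ × β₁)} (hP : π.fst = P) (hR : π.snd = R) :
    transportCost c P R ≤ ∫⁻ z, c z ∂π :=
  iInf₂_le π ⟨hP, hR⟩

lemma le_transportCost {c : α₁ × β₁ → ℝ≥0∞} {P : Measure α₁} {R : Measure β₁} {a : ℝ≥0∞}
    (h : ∀ π : Measure (α₁ × β₁), π.fst = P → π.snd = R → a ≤ ∫⁻ z, c z ∂π) :
    a ≤ transportCost c P R :=
  le_iInf₂ fun π hπ => h π hπ.1 hπ.2

def sumCost (c₁ : α₁ × β₁ → ℝ≥0∞) (c₂ : α₂ × β₂ → ℝ≥0∞) :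
    (α₁ × α₂) × (β₁ × β₂) → ℝ≥0∞ :=
  fun z => c₁ (Prod.map Prod.fst Prod.fst z) + c₂ (Prod.map Prod.snd Prod.snd z)

lemma lintegral_sumCost {c₁ : α₁ × β₁ → ℝ≥0∞} {c₂ : α₂ × β₂ → ℝ≥0∞} (hc₁ : Measurable c₁)
    (hc₂ : Measurable c₂) (π : Measure ((α₁ × α₂) × (β₁ × β₂))) :
    ∫⁻ z, sumCost c₁ c₂ z ∂π =
      ∫⁻ w, c₁ w ∂π.map (Prod.map Prod.fst Prod.fst) +
        ∫⁻ w, c₂ w ∂π.map (Prod.map Prod.snd Prod.snd) := by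
  rw [lintegral_map hc₁ (by fun_prop), lintegral_map hc₂ (by fun_prop)]
  exact lintegral_add_left (hc₁.comp (by fun_prop)) _

lemma transportCost_sumCost_prod_le {c₁ : α₁ × β₁ → ℝ≥0∞} {c₂ : α₂ × β₂ → ℝ≥0∞}
    (hc₁ : Measurable c₁) (hc₂ : Measurable c₂) (P₁ : Measure α₁) (P₂ : Measure α₂)
    [IsProbabilityMeasure P₁] [IsProbabilityMeasure P₂] (R₁ : Measure β₁) (R₂ : Measure β₂) :
    transportCost (sumCost c₁ c₂) (P₁.prod P₂) (R₁.prod R₂) ≤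
      transportCost c₁ P₁ R₁ + transportCost c₂ P₂ R₂ := by
  refine ENNReal.le_iInf₂_add_iInf₂ fun π₁ ⟨hP₁, hR₁⟩ π₂ ⟨hP₂, hR₂⟩ => ?_
  have := Measure.isProbabilityMeasure_of_fst_eq hP₁
  have := Measure.isProbabilityMeasure_of_fst_eq hP₂
  let φ : (α₁ × β₁) × (α₂ × β₂) → (α₁ × α₂) × (β₁ × β₂) :=
    fun w => ((w.1.1, w.2.1), (w.1.2, w.2.2))
  have hφ : Measurable φ := by fun_prop
  have h₁ : ((π₁.prod π₂).map φ).map (Prod.map Prod.fst Prod.fst) = π₁ := by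
    rw [Measure.map_map (by fun_prop) hφ]
    exact Measure.fst_prod
  have h₂ : ((π₁.prod π₂).map φ).map (Prod.map Prod.snd Prod.snd) = π₂ := by
    rw [Measure.map_map (by fun_prop) hφ]
    exact Measure.snd_prod
  refine (transportCost_le_lintegral (π := (π₁.prod π₂).map φ) ?_ ?_).trans_eq ?_
  · rw [Measure.fst, Measure.map_map measurable_fst hφ, ← hP₁, ← hP₂]
    exact (Measure.map_prod_map π₁ π₂ measurable_fst measurable_fst).symm
  · rw [Measure.snd, Measure.map_map measurable_snd hφ, ← hR₁, ← hR₂]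
    exact (Measure.map_prod_map π₁ π₂ measurable_snd measurable_snd).symm
  · rw [lintegral_sumCost hc₁ hc₂, h₁, h₂]

lemma transportCost_fst_add_transportCost_snd_le {c₁ : α₁ × β₁ → ℝ≥0∞}
    {c₂ : α₂ × β₂ → ℝ≥0∞} (hc₁ : Measurable c₁) (hc₂ : Measurable c₂) (P₁ : Measure α₁)
    (P₂ : Measure α₂) [IsProbabilityMeasure P₁] [IsProbabilityMeasure P₂]
    (R : Measure (β₁ × β₂)) :
    transportCost c₁ P₁ R.fst + transportCost c₂ P₂ R.snd ≤
      transportCost (sumCost c₁ c₂) (P₁.prod P₂) R := by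
  refine le_transportCost fun π hP hR => ?_
  rw [lintegral_sumCost hc₁ hc₂]
  gcongr
  · refine transportCost_le_lintegral ?_ ?_
    · rw [π.fst_map_prodMap measurable_fst measurable_fst, ← Measure.fst, hP, Measure.fst_prod]
    · rw [π.snd_map_prodMap measurable_fst measurable_fst, hR]; rfl
  · refine transportCost_le_lintegral ?_ ?_
    · rw [π.fst_map_prodMap measurable_snd measurable_snd, ← Measure.snd, hP, Measure.snd_prod]
    · rw [π.snd_map_prodMap measurable_snd measurable_snd, hR]; rfl

end Transport

lemma proxOTKL_le {X Y : Type*} [MeasurableSpace X] [MeasurableSpace Y]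
    (c : X × Y → ℝ≥0∞) (ε : ℝ) (P : Measure X) (Q R : Measure Y) [IsProbabilityMeasure R] :
    proxOTKL c ε P Q ≤ transportCost c P R + ENNReal.ofReal ε * klDiv R Q :=
  iInf_le (fun R : ProbabilityMeasure Y => transportCost c P R + ENNReal.ofReal ε * klDiv R Q)
    ⟨R, inferInstance⟩

section Proximal

variable {α₁ α₂ β₁ β₂ : Type*} [MeasurableSpace α₁] [MeasurableSpace α₂]
  [MeasurableSpace β₁] [MeasurableSpace β₂]
  {c₁ : α₁ × β₁ → ℝ≥0∞} {c₂ : α₂ × β₂ → ℝ≥0∞}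
  (P₁ : Measure α₁) (P₂ : Measure α₂) (Q₁ : Measure β₁) (Q₂ : Measure β₂)
  [IsProbabilityMeasure P₁] [IsProbabilityMeasure P₂]
  [IsProbabilityMeasure Q₁] [IsProbabilityMeasure Q₂]

lemma proxOTKL_sumCost_prod_le (hc₁ : Measurable c₁) (hc₂ : Measurable c₂) (ε : ℝ) :
    proxOTKL (sumCost c₁ c₂) ε (P₁.prod P₂) (Q₁.prod Q₂) ≤
      proxOTKL c₁ ε P₁ Q₁ + proxOTKL c₂ ε P₂ Q₂ := by
  refine ENNReal.le_iInf_add_iInf fun R₁ R₂ => ?_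
  calc proxOTKL (sumCost c₁ c₂) ε (P₁.prod P₂) (Q₁.prod Q₂)
      ≤ transportCost (sumCost c₁ c₂) (P₁.prod P₂) (R₁.toMeasure.prod R₂) +
        ENNReal.ofReal ε * klDiv (R₁.toMeasure.prod R₂) (Q₁.prod Q₂) := proxOTKL_le _ _ _ _ _
    _ ≤ (transportCost c₁ P₁ R₁ + transportCost c₂ P₂ R₂) +
        ENNReal.ofReal ε * (klDiv R₁.toMeasure Q₁ + klDiv R₂.toMeasure Q₂) := by
        rw [_root_.klDiv_prod]
        gcongr
        exact transportCost_sumCost_prod_le hc₁ hc₂ P₁ P₂ R₁ R₂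
    _ = _ := by ring

lemma le_proxOTKL_sumCost_prod [StandardBorelSpace β₂] [Nonempty β₂] (hc₁ : Measurable c₁)
    (hc₂ : Measurable c₂) (ε : ℝ) :
    proxOTKL c₁ ε P₁ Q₁ + proxOTKL c₂ ε P₂ Q₂ ≤
      proxOTKL (sumCost c₁ c₂) ε (P₁.prod P₂) (Q₁.prod Q₂) := by
  refine le_iInf fun R => ?_
  calc proxOTKL c₁ ε P₁ Q₁ + proxOTKL c₂ ε P₂ Q₂
      ≤ (transportCost c₁ P₁ R.toMeasure.fst + ENNReal.ofReal ε * klDiv R.toMeasure.fst Q₁) +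
        (transportCost c₂ P₂ R.toMeasure.snd + ENNReal.ofReal ε * klDiv R.toMeasure.snd Q₂) :=
        add_le_add (proxOTKL_le _ _ _ _ _) (proxOTKL_le _ _ _ _ _)
    _ = (transportCost c₁ P₁ R.toMeasure.fst + transportCost c₂ P₂ R.toMeasure.snd) +
        ENNReal.ofReal ε * (klDiv R.toMeasure.fst Q₁ + klDiv R.toMeasure.snd Q₂) := by ring
    _ ≤ _ := by
        gcongr
        · exact transportCost_fst_add_transportCost_snd_le hc₁ hc₂ P₁ P₂ R
        · exact klDiv_fst_add_klDiv_snd_le R Q₁ Q₂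

theorem proxOTKL_sumCost_prod [StandardBorelSpace β₂] [Nonempty β₂] (hc₁ : Measurable c₁)
    (hc₂ : Measurable c₂) (ε : ℝ) :
    proxOTKL (sumCost c₁ c₂) ε (P₁.prod P₂) (Q₁.prod Q₂) =
      proxOTKL c₁ ε P₁ Q₁ + proxOTKL c₂ ε P₂ Q₂ :=
  (proxOTKL_sumCost_prod_le P₁ P₂ Q₁ Q₂ hc₁ hc₂ ε).antisymm
    (le_proxOTKL_sumCost_prod P₁ P₂ Q₁ Q₂ hc₁ hc₂ ε)

end Proximal

lemma measurable_lpCost (m : ℕ) (p : ℝ) : Measurable (lpCost m p) := by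
  unfold lpCost
  fun_prop

theorem proxOTKL_additive_prod_general
    (n₁ n₂ : ℕ) (p : ℝ)
    (P₁ Q₁ : Measure (Fin n₁ → ℝ)) [IsProbabilityMeasure P₁] [IsProbabilityMeasure Q₁]
    (P₂ Q₂ : Measure (Fin n₂ → ℝ)) [IsProbabilityMeasure P₂] [IsProbabilityMeasure Q₂]
    (ε : ℝ) :
    proxOTKL
      (fun z : ((Fin n₁ → ℝ) × (Fin n₂ → ℝ)) × ((Fin n₁ → ℝ) × (Fin n₂ → ℝ)) =>
        lpCost n₁ p (z.1.1, z.2.1) + lpCost n₂ p (z.1.2, z.2.2))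
      ε (P₁.prod P₂) (Q₁.prod Q₂) =
    proxOTKL (lpCost n₁ p) ε P₁ Q₁ + proxOTKL (lpCost n₂ p) ε P₂ Q₂ :=
  proxOTKL_sumCost_prod P₁ P₂ Q₁ Q₂ (measurable_lpCost n₁ p) (measurable_lpCost n₂ p) ε

/-- Additivity of the proximal `p`-Wasserstein KL divergence for product measures, under
the identification `ℝⁿ = ℝ^{n₁} × ℝ^{n₂}` (with `n = n₁ + n₂` and
`‖(x₁,x₂) − (y₁,y₂)‖_p^p = ‖x₁ − y₁‖_p^p + ‖x₂ − y₂‖_p^p`):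
`𝔇^p_{KL,ε}(P₁ ⊗ P₂ ‖ Q₁ ⊗ Q₂) = 𝔇^p_{KL,ε}(P₁ ‖ Q₁) + 𝔇^p_{KL,ε}(P₂ ‖ Q₂)`. -/
theorem proxOTKL_additive_prod
    (n₁ n₂ : ℕ) (p : ℝ) (hp : 1 ≤ p)
    (P₁ Q₁ : Measure (Fin n₁ → ℝ)) [IsProbabilityMeasure P₁] [IsProbabilityMeasure Q₁]
    (P₂ Q₂ : Measure (Fin n₂ → ℝ)) [IsProbabilityMeasure P₂] [IsProbabilityMeasure Q₂]
    -- all measures have finite `p`-th moments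
    (hP₁ : ∫⁻ x, ENNReal.ofReal (∑ i, |x i| ^ p) ∂P₁ < ⊤)
    (hQ₁ : ∫⁻ x, ENNReal.ofReal (∑ i, |x i| ^ p) ∂Q₁ < ⊤)
    (hP₂ : ∫⁻ x, ENNReal.ofReal (∑ i, |x i| ^ p) ∂P₂ < ⊤)
    (hQ₂ : ∫⁻ x, ENNReal.ofReal (∑ i, |x i| ^ p) ∂Q₂ < ⊤)
    (ε : ℝ) (hε : 0 < ε) :
    proxOTKL
      (fun z : ((Fin n₁ → ℝ) × (Fin n₂ → ℝ)) × ((Fin n₁ → ℝ) × (Fin n₂ → ℝ)) =>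
        lpCost n₁ p (z.1.1, z.2.1) + lpCost n₂ p (z.1.2, z.2.2))
      ε (P₁.prod P₂) (Q₁.prod Q₂) =
    proxOTKL (lpCost n₁ p) ε P₁ Q₁ + proxOTKL (lpCost n₂ p) ε P₂ Q₂ :=
  proxOTKL_additive_prod_general n₁ n₂ p P₁ Q₁ P₂ Q₂ ε
end
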